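/- arXiv:2302.00983 — 9 statements merged into one kernel-verified Lean document; each statement's English description precedes it below -/
import Mathlib

section
/- Let E and E' be finite-dimensional real normed vector spaces with geometric structures B and B' respectively, and let Φ : E → E' be a geometromorphism. Let F : E' → ℝ be differentiable at Φ x. If u ∈ E is a left-gradient of F ∘ Φ at x with respect to B, then fderiv ℝ Φ x u is a left-gradient of F at Φ x with respect to B'. Likewise, if u is a right-gradient of F ∘ Φ at x with respect to B, then fderiv ℝ Φ x u is a right-gradient of F at Φ x with respect to B'. -/
open Function

/-- Geometromorphisms push left-gradients to left-gradients and right-gradients to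
right-gradients. -/
theorem geometromorphism_pushforward_gradient
    {E : Type*} [NormedAddCommGroup E] [NormedSpace ℝ E] [FiniteDimensional ℝ E]
    {E' : Type*} [NormedAddCommGroup E'] [NormedSpace ℝ E'] [FiniteDimensional ℝ E']
    (B : E → (E →ₗ[ℝ] E →ₗ[ℝ] ℝ)) (B' : E' → (E' →ₗ[ℝ] E' →ₗ[ℝ] ℝ))
    (hB1 : ∀ x v, (∀ w, B x v w = 0) → v = 0)
    (hB2 : ∀ x w, (∀ v, B x v w = 0) → w = 0)
    (hB'1 : ∀ x v, (∀ w, B' x v w = 0) → v = 0)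
    (hB'2 : ∀ x w, (∀ v, B' x v w = 0) → w = 0)
    (Φ : E → E') (Ψ : E' → E)
    (hΦ : ContDiff ℝ (⊤ : ℕ∞) Φ) (hΨ : ContDiff ℝ (⊤ : ℕ∞) Ψ)
    (hΨΦ : LeftInverse Ψ Φ) (hΦΨ : RightInverse Ψ Φ)
    (hpres : ∀ x v w, B' (Φ x) (fderiv ℝ Φ x v) (fderiv ℝ Φ x w) = B x v w)
    (F : E' → ℝ) (x : E) (hF : DifferentiableAt ℝ F (Φ x)) (u : E) :
    ((∀ w, B x u w = fderiv ℝ (F ∘ Φ) x w) →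
      ∀ w, B' (Φ x) (fderiv ℝ Φ x u) w = fderiv ℝ F (Φ x) w) ∧
    ((∀ w, B x w u = fderiv ℝ (F ∘ Φ) x w) →
      ∀ w, B' (Φ x) w (fderiv ℝ Φ x u) = fderiv ℝ F (Φ x) w) := by
  have hΦd : ∀ y, DifferentiableAt ℝ Φ y := fun y => (hΦ.differentiable (by simp)) y
  have hΨd : ∀ y, DifferentiableAt ℝ Ψ y := fun y => (hΨ.differentiable (by simp)) y
  -- surjectivity of fderiv Φ x
  have hsurj : ∀ w' : E', fderiv ℝ Φ x (fderiv ℝ Ψ (Φ x) w') = w' := by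
    intro w'
    have hid : Φ ∘ Ψ = id := funext hΦΨ
    have h1 : fderiv ℝ (Φ ∘ Ψ) (Φ x) =
        (fderiv ℝ Φ (Ψ (Φ x))).comp (fderiv ℝ Ψ (Φ x)) :=
      fderiv_comp (x := Φ x) (hΦd _) (hΨd _)
    rw [hid, fderiv_id] at h1
    have := congrArg (fun L : E' →L[ℝ] E' => L w') h1
    simp only [ContinuousLinearMap.id_apply, ContinuousLinearMap.comp_apply] at this
    rw [hΨΦ x] at this
    exact this.symm
  have hchain : ∀ w : E, fderiv ℝ (F ∘ Φ) x w = fderiv ℝ F (Φ x) (fderiv ℝ Φ x w) := by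
    intro w
    rw [fderiv_comp (x := x) hF (hΦd x)]
    rfl
  constructor
  · intro h w'
    rw [← hsurj w', hpres, h, hchain, hsurj]
  · intro h w'
    rw [← hsurj w', hpres, h, hchain, hsurj]
end

section
/- Let E and E' be finite-dimensional real normed vector spaces with geometric structures B and B' respectively, and let Φ : E → E' be a geometromorphism. Let F, G : E' → ℝ be differentiable at Φ x, let u', v' be left-gradients of F, G at Φ x with respect to B', and let u, v be left-gradients of F ∘ Φ, G ∘ Φ at x with respect to B. Then B x u v = B' (Φ x) u' v'; that is, geometromorphisms preserve b-brackets: {F ∘ Φ, G ∘ Φ}_B (x) = {F, G}_{B'} (Φ x). -/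
open Function

/-- Geometromorphisms preserve b-brackets: `{F ∘ Φ, G ∘ Φ}_B (x) = {F, G}_{B'} (Φ x)`. -/
theorem geometromorphism_preserves_bBracket
    {E : Type*} [NormedAddCommGroup E] [NormedSpace ℝ E] [FiniteDimensional ℝ E]
    {E' : Type*} [NormedAddCommGroup E'] [NormedSpace ℝ E'] [FiniteDimensional ℝ E']
    (B : E → (E →ₗ[ℝ] E →ₗ[ℝ] ℝ)) (B' : E' → (E' →ₗ[ℝ] E' →ₗ[ℝ] ℝ))
    (hB1 : ∀ x v, (∀ w, B x v w = 0) → v = 0)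
    (hB2 : ∀ x w, (∀ v, B x v w = 0) → w = 0)
    (hB'1 : ∀ x v, (∀ w, B' x v w = 0) → v = 0)
    (hB'2 : ∀ x w, (∀ v, B' x v w = 0) → w = 0)
    (Φ : E → E') (Ψ : E' → E)
    (hΦ : ContDiff ℝ (⊤ : ℕ∞) Φ) (hΨ : ContDiff ℝ (⊤ : ℕ∞) Ψ)
    (hΨΦ : LeftInverse Ψ Φ) (hΦΨ : RightInverse Ψ Φ)
    (hpres : ∀ x v w, B' (Φ x) (fderiv ℝ Φ x v) (fderiv ℝ Φ x w) = B x v w)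
    (F G : E' → ℝ) (x : E)
    (hF : DifferentiableAt ℝ F (Φ x)) (hG : DifferentiableAt ℝ G (Φ x))
    (u' v' : E') (u v : E)
    (hu' : ∀ w, B' (Φ x) u' w = fderiv ℝ F (Φ x) w)
    (hv' : ∀ w, B' (Φ x) v' w = fderiv ℝ G (Φ x) w)
    (hu : ∀ w, B x u w = fderiv ℝ (F ∘ Φ) x w)
    (hv : ∀ w, B x v w = fderiv ℝ (G ∘ Φ) x w) :
    B x u v = B' (Φ x) u' v' := by
  have hΦd : Differentiable ℝ Φ := hΦ.differentiable (by simp)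
  have hΨd : Differentiable ℝ Ψ := hΨ.differentiable (by simp)
  have hid : (fderiv ℝ Φ x).comp (fderiv ℝ Ψ (Φ x)) = ContinuousLinearMap.id ℝ E' := by
    have h1 : fderiv ℝ (Φ ∘ Ψ) (Φ x) = (fderiv ℝ Φ (Ψ (Φ x))).comp (fderiv ℝ Ψ (Φ x)) :=
      fderiv_comp _ (hΦd _) (hΨd _)
    rw [hΨΦ x] at h1
    rw [← h1, hΦΨ.comp_eq_id, fderiv_id]
  have hsurj : Surjective (fderiv ℝ Φ x) := fun y =>
    ⟨fderiv ℝ Ψ (Φ x) y, by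
      have := ContinuousLinearMap.ext_iff.mp hid y
      simpa using this⟩
  have hchainF : fderiv ℝ (F ∘ Φ) x = (fderiv ℝ F (Φ x)).comp (fderiv ℝ Φ x) :=
    fderiv_comp x hF (hΦd x)
  have hchainG : fderiv ℝ (G ∘ Φ) x = (fderiv ℝ G (Φ x)).comp (fderiv ℝ Φ x) :=
    fderiv_comp x hG (hΦd x)
  have hDu : fderiv ℝ Φ x u = u' := by
    have h0 : fderiv ℝ Φ x u - u' = 0 := by
      apply hB'1 (Φ x)
      intro w'
      obtain ⟨w, rfl⟩ := hsurj w'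
      have h1 : B' (Φ x) (fderiv ℝ Φ x u) (fderiv ℝ Φ x w) = B x u w := hpres x u w
      have h2 : B' (Φ x) u' (fderiv ℝ Φ x w) = fderiv ℝ F (Φ x) (fderiv ℝ Φ x w) := hu' _
      have h3 := hu w
      rw [hchainF] at h3
      simp only [ContinuousLinearMap.comp_apply] at h3
      simp [map_sub, LinearMap.sub_apply, h1, h2, h3]
    have := sub_eq_zero.mp h0
    exact this
  have hDv : fderiv ℝ Φ x v = v' := by
    have h0 : fderiv ℝ Φ x v - v' = 0 := by
      apply hB'1 (Φ x)
      intro w'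
      obtain ⟨w, rfl⟩ := hsurj w'
      have h1 : B' (Φ x) (fderiv ℝ Φ x v) (fderiv ℝ Φ x w) = B x v w := hpres x v w
      have h2 : B' (Φ x) v' (fderiv ℝ Φ x w) = fderiv ℝ G (Φ x) (fderiv ℝ Φ x w) := hv' _
      have h3 := hv w
      rw [hchainG] at h3
      simp only [ContinuousLinearMap.comp_apply] at h3
      simp [map_sub, LinearMap.sub_apply, h1, h2, h3]
    exact sub_eq_zero.mp h0
  rw [← hDu, ← hDv, hpres]
end

section
/- Let E be a finite-dimensional real normed vector space with geometric structure B, let F, G : E → ℝ be differentiable at p, let uL and uR be a left-gradient and a right-gradient of F at p, and let vL be a left-gradient of G at p. Then the symmetric b-bracket satisfies (1/2) * (B p vL uL + B p uL vL) = fderiv ℝ G p ((1/2) • (uL + uR)); that is, the left (equivalently, right) Leibniz vector field of F for the symmetric b-bracket evaluated on G at p equals the directional derivative of G at p along (1/2)(∇^L F + ∇^R F)(p). -/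
theorem LinearMap.apply_leftGrad_eq_of_rightGrad {R M : Type*} [CommSemiring R]
    [AddCommMonoid M] [Module R M] (B : M →ₗ[R] M →ₗ[R] R) {f g : M → R} {uL uR vL : M}
    (huL : ∀ w, B uL w = f w) (huR : ∀ w, B w uR = f w) (hvL : ∀ w, B vL w = g w) :
    B uL vL = g uR :=
  calc B uL vL = f vL := huL vL
    _ = B vL uR := (huR vL).symm
    _ = g uR := hvL uR

theorem symBracket_leibniz_vectorField_general
    {E : Type*} [NormedAddCommGroup E] [NormedSpace ℝ E]
    (B : E → (E →ₗ[ℝ] E →ₗ[ℝ] ℝ))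
    (F G : E → ℝ) (p : E)
    (uL uR vL : E)
    (huL : ∀ w, B p uL w = fderiv ℝ F p w)
    (huR : ∀ w, B p w uR = fderiv ℝ F p w)
    (hvL : ∀ w, B p vL w = fderiv ℝ G p w) :
    (1/2 : ℝ) * (B p vL uL + B p uL vL) = fderiv ℝ G p ((1/2 : ℝ) • (uL + uR)) := by
  rw [hvL uL, (B p).apply_leftGrad_eq_of_rightGrad huL huR hvL, map_smul, map_add,
    smul_eq_mul]

/-- The Leibniz vector field of `F` for the symmetric b-bracket is
`(1/2)(∇^L F + ∇^R F)`: evaluated on `G` at `p`, the symmetric b-bracket equals the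
directional derivative of `G` along `(1/2)(uL + uR)`. -/
theorem symBracket_leibniz_vectorField
    {E : Type*} [NormedAddCommGroup E] [NormedSpace ℝ E] [FiniteDimensional ℝ E]
    (B : E → (E →ₗ[ℝ] E →ₗ[ℝ] ℝ))
    (hB1 : ∀ x v, (∀ w, B x v w = 0) → v = 0)
    (hB2 : ∀ x w, (∀ v, B x v w = 0) → w = 0)
    (F G : E → ℝ) (p : E)
    (hF : DifferentiableAt ℝ F p) (hG : DifferentiableAt ℝ G p)
    (uL uR vL : E)
    (huL : ∀ w, B p uL w = fderiv ℝ F p w)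
    (huR : ∀ w, B p w uR = fderiv ℝ F p w)
    (hvL : ∀ w, B p vL w = fderiv ℝ G p w) :
    (1/2 : ℝ) * (B p vL uL + B p uL vL) = fderiv ℝ G p ((1/2 : ℝ) • (uL + uR)) :=
  symBracket_leibniz_vectorField_general B F G p uL uR vL huL huR hvL
end

section
/- Let E be a finite-dimensional real normed vector space with geometric structure B, let F, G : E → ℝ be differentiable at p, let uL and uR be a left-gradient and a right-gradient of F at p, and let vL be a left-gradient of G at p. Then the skew-symmetric b-bracket satisfies (1/2) * (B p vL uL − B p uL vL) = fderiv ℝ G p ((1/2) • (uL − uR)); that is, the Hamilton–Poisson vector field of F for the skew-symmetric b-bracket evaluated on G at p equals the directional derivative of G at p along (1/2)(∇^L F − ∇^R F)(p). -/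
theorem LinearMap.apply_sub_apply_swap_eq_of_forall_eq
    {R M : Type*} [CommRing R] [AddCommGroup M] [Module R M]
    (b : M →ₗ[R] M →ₗ[R] R) (g : M →ₗ[R] R) {u u' v : M}
    (huu' : ∀ w, b u w = b w u') (hv : ∀ w, b v w = g w) :
    b v u - b u v = g (u - u') := by
  rw [huu' v, map_sub, ← hv, ← hv]

theorem skewBracket_hamiltonPoisson_vectorField_general
    {E : Type*} [NormedAddCommGroup E] [NormedSpace ℝ E]
    (B : E → (E →ₗ[ℝ] E →ₗ[ℝ] ℝ))
    (F G : E → ℝ) (p : E)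
    (uL uR vL : E)
    (huL : ∀ w, B p uL w = fderiv ℝ F p w)
    (huR : ∀ w, B p w uR = fderiv ℝ F p w)
    (hvL : ∀ w, B p vL w = fderiv ℝ G p w) :
    (1/2 : ℝ) * (B p vL uL - B p uL vL) = fderiv ℝ G p ((1/2 : ℝ) • (uL - uR)) := by
  rw [map_smul, smul_eq_mul,
    (B p).apply_sub_apply_swap_eq_of_forall_eq (fderiv ℝ G p : E →ₗ[ℝ] ℝ)
      (fun w ↦ (huL w).trans (huR w).symm) hvL, ContinuousLinearMap.coe_coe]

/-- The Hamilton–Poisson vector field of `F` for the skew-symmetric b-bracket is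
`(1/2)(∇^L F − ∇^R F)`: evaluated on `G` at `p`, the skew-symmetric b-bracket equals the
directional derivative of `G` along `(1/2)(uL − uR)`. -/
theorem skewBracket_hamiltonPoisson_vectorField
    {E : Type*} [NormedAddCommGroup E] [NormedSpace ℝ E] [FiniteDimensional ℝ E]
    (B : E → (E →ₗ[ℝ] E →ₗ[ℝ] ℝ))
    (hB1 : ∀ x v, (∀ w, B x v w = 0) → v = 0)
    (hB2 : ∀ x w, (∀ v, B x v w = 0) → w = 0)
    (F G : E → ℝ) (p : E)
    (hF : DifferentiableAt ℝ F p) (hG : DifferentiableAt ℝ G p)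
    (uL uR vL : E)
    (huL : ∀ w, B p uL w = fderiv ℝ F p w)
    (huR : ∀ w, B p w uR = fderiv ℝ F p w)
    (hvL : ∀ w, B p vL w = fderiv ℝ G p w) :
    (1/2 : ℝ) * (B p vL uL - B p uL vL) = fderiv ℝ G p ((1/2 : ℝ) • (uL - uR)) :=
  skewBracket_hamiltonPoisson_vectorField_general B F G p uL uR vL huL huR hvL
end

section
/- Let E be a finite-dimensional real normed vector space with geometric structure B, and let F, G : E → ℝ be differentiable with differentiable left-gradient fields gF, gG : E → E with respect to B. Let g : E → E be a differentiable left-gradient field of the product F · G with respect to B. Then for every x, trace(fderiv ℝ g x) = F x * trace(fderiv ℝ gG x) + G x * trace(fderiv ℝ gF x) + B x (gF x) (gG x) + B x (gG x) (gF x); that is, Δ^L_B (F G) = F Δ^L_B G + G Δ^L_B F + b(∇^L F, ∇^L G) + b(∇^L G, ∇^L F). -/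
/-!
Nondegeneracy of `B x` makes left gradients unique, so the Leibniz rule for `d(FG)` forces
`∇^L(FG) = F ∇^L G + G ∇^L F`. Taking the trace of the derivative of `f • V` gives
`f div V + df(V)`, and `df(V)` is `b(∇^L f, V)` by the defining property of `∇^L f`.
-/

section

variable {𝕜 E : Type*} [NontriviallyNormedField 𝕜] [NormedAddCommGroup E] [NormedSpace 𝕜 E]

theorem trace_fderiv_smul [FiniteDimensional 𝕜 E] {c : E → 𝕜} {V : E → E} {x : E}
    (hc : DifferentiableAt 𝕜 c x) (hV : DifferentiableAt 𝕜 V x) :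
    LinearMap.trace 𝕜 E (fderiv 𝕜 (fun y => c y • V y) x).toLinearMap =
      c x * LinearMap.trace 𝕜 E (fderiv 𝕜 V x).toLinearMap + fderiv 𝕜 c x (V x) := by
  rw [fderiv_fun_smul hc hV, ContinuousLinearMap.toLinearMap_add, map_add,
    ContinuousLinearMap.toLinearMap_smul, map_smul, smul_eq_mul]
  exact congrArg _ (LinearMap.trace_smulRight _ _)

theorem leftGradient_mul {B : E →ₗ[𝕜] E →ₗ[𝕜] 𝕜} (hB : ∀ v, (∀ w, B v w = 0) → v = 0)
    {F G : E → 𝕜} {x : E} (hF : DifferentiableAt 𝕜 F x) (hG : DifferentiableAt 𝕜 G x)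
    {gF gG g : E} (hgF : ∀ w, B gF w = fderiv 𝕜 F x w) (hgG : ∀ w, B gG w = fderiv 𝕜 G x w)
    (hg : ∀ w, B g w = fderiv 𝕜 (fun y => F y * G y) x w) :
    g = F x • gG + G x • gF := by
  refine sub_eq_zero.mp (hB _ fun w => ?_)
  simp only [map_sub, map_add, map_smul, LinearMap.sub_apply, LinearMap.add_apply,
    LinearMap.smul_apply, hg, hgF, hgG, fderiv_fun_mul hF hG, add_apply,
    smul_apply, smul_eq_mul]
  ring

end

theorem leftLaplacian_product_rule_general
    {E : Type*} [NormedAddCommGroup E] [NormedSpace ℝ E] [FiniteDimensional ℝ E]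
    (B : E → (E →ₗ[ℝ] E →ₗ[ℝ] ℝ))
    (hB1 : ∀ x v, (∀ w, B x v w = 0) → v = 0)
    (F G : E → ℝ) (hF : Differentiable ℝ F) (hG : Differentiable ℝ G)
    (gF gG g : E → E)
    (hgF : Differentiable ℝ gF) (hgG : Differentiable ℝ gG)
    (hgFgrad : ∀ x w, B x (gF x) w = fderiv ℝ F x w)
    (hgGgrad : ∀ x w, B x (gG x) w = fderiv ℝ G x w)
    (hggrad : ∀ x w, B x (g x) w = fderiv ℝ (fun y => F y * G y) x w) :
    ∀ x, LinearMap.trace ℝ E (fderiv ℝ g x).toLinearMap =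
      F x * LinearMap.trace ℝ E (fderiv ℝ gG x).toLinearMap +
      G x * LinearMap.trace ℝ E (fderiv ℝ gF x).toLinearMap +
      B x (gF x) (gG x) + B x (gG x) (gF x) := by
  intro x
  have hg_eq : g = fun y => F y • gG y + G y • gF y := funext fun y =>
    leftGradient_mul (hB1 y) (hF y) (hG y) (hgFgrad y) (hgGgrad y) (hggrad y)
  have hFgG : DifferentiableAt ℝ (fun y => F y • gG y) x := (hF x).smul (hgG x)
  have hGgF : DifferentiableAt ℝ (fun y => G y • gF y) x := (hG x).smul (hgF x)
  rw [hg_eq, fderiv_fun_add hFgG hGgF,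
    ContinuousLinearMap.toLinearMap_add, map_add, trace_fderiv_smul (hF x) (hgG x),
    trace_fderiv_smul (hG x) (hgF x), ← hgFgrad, ← hgGgrad]
  ring

/-- Product rule for the left Laplacian:
`Δ^L_B (F G) = F Δ^L_B G + G Δ^L_B F + b(∇^L F, ∇^L G) + b(∇^L G, ∇^L F)`. -/
theorem leftLaplacian_product_rule
    {E : Type*} [NormedAddCommGroup E] [NormedSpace ℝ E] [FiniteDimensional ℝ E]
    (B : E → (E →ₗ[ℝ] E →ₗ[ℝ] ℝ))
    (hB1 : ∀ x v, (∀ w, B x v w = 0) → v = 0)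
    (hB2 : ∀ x w, (∀ v, B x v w = 0) → w = 0)
    (F G : E → ℝ) (hF : Differentiable ℝ F) (hG : Differentiable ℝ G)
    (gF gG g : E → E)
    (hgF : Differentiable ℝ gF) (hgG : Differentiable ℝ gG) (hg : Differentiable ℝ g)
    (hgFgrad : ∀ x w, B x (gF x) w = fderiv ℝ F x w)
    (hgGgrad : ∀ x w, B x (gG x) w = fderiv ℝ G x w)
    (hggrad : ∀ x w, B x (g x) w = fderiv ℝ (fun y => F y * G y) x w) :
    ∀ x, LinearMap.trace ℝ E (fderiv ℝ g x).toLinearMap =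
      F x * LinearMap.trace ℝ E (fderiv ℝ gG x).toLinearMap +
      G x * LinearMap.trace ℝ E (fderiv ℝ gF x).toLinearMap +
      B x (gF x) (gG x) + B x (gG x) (gF x) :=
  leftLaplacian_product_rule_general B hB1 F G hF hG gF gG g hgF hgG hgFgrad hgGgrad hggrad
end

section
/- Let E be a finite-dimensional real normed vector space with geometric structure B, and let F, G : E → ℝ be differentiable. Suppose gF, gG are differentiable left-gradient fields of F, G, g a differentiable left-gradient field of F·G, and hF, hG differentiable right-gradient fields of F, G, h a differentiable right-gradient field of F·G, all with respect to B. Then for every x, trace(fderiv ℝ g x) − F x * trace(fderiv ℝ gG x) − G x * trace(fderiv ℝ gF x) = trace(fderiv ℝ h x) − F x * trace(fderiv ℝ hG x) − G x * trace(fderiv ℝ hF x); that is, Δ^L_B(FG) − F Δ^L_B G − G Δ^L_B F = Δ^R_B(FG) − F Δ^R_B G − G Δ^R_B F. -/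
/-!
Nondegeneracy makes gradient fields unique, so the left gradient of `F * G` is `F • ∇G + G • ∇F`,
and the product rule for the divergence leaves the Leibniz defect `dF(∇G) + dG(∇F)`. For left
gradients `gF, gG` and right gradients `hF, hG` both `dF(gG)` and `dG(hF)` equal `B(gG, hF)`,
and likewise `dG(gF) = B(gF, hG) = dF(hG)`, so the two defects coincide.
-/

section GeometricStructure

variable {𝕜 E : Type*} [NontriviallyNormedField 𝕜] [NormedAddCommGroup E] [NormedSpace 𝕜 E]

noncomputable def divergence (g : E → E) (x : E) : 𝕜 :=
  LinearMap.trace 𝕜 E (fderiv 𝕜 g x).toLinearMap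

theorem divergence_add {g₁ g₂ : E → E} {x : E} (h₁ : DifferentiableAt 𝕜 g₁ x)
    (h₂ : DifferentiableAt 𝕜 g₂ x) :
    divergence (𝕜 := 𝕜) (fun y => g₁ y + g₂ y) x = divergence g₁ x + divergence g₂ x := by
  simp only [divergence, fderiv_fun_add h₁ h₂, ContinuousLinearMap.toLinearMap_add, map_add]

theorem divergence_smul [FiniteDimensional 𝕜 E] {a : E → 𝕜} {b : E → E} {x : E}
    (ha : DifferentiableAt 𝕜 a x) (hb : DifferentiableAt 𝕜 b x) :
    divergence (fun y => a y • b y) x = fderiv 𝕜 a x (b x) + a x * divergence b x := by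
  simp only [divergence, fderiv_fun_smul ha hb, ContinuousLinearMap.toLinearMap_add,
    ContinuousLinearMap.toLinearMap_smul, map_add, map_smul, smul_eq_mul]
  rw [add_comm]
  congr 1
  exact LinearMap.trace_smulRight _ _

def IsLeftGradient (B : E → E →ₗ[𝕜] E →ₗ[𝕜] 𝕜) (F : E → 𝕜) (g : E → E) : Prop :=
  ∀ x w, B x (g x) w = fderiv 𝕜 F x w

theorem IsLeftGradient.unique {B : E → E →ₗ[𝕜] E →ₗ[𝕜] 𝕜}
    (hB : ∀ x v, (∀ w, B x v w = 0) → v = 0) {F : E → 𝕜} {g g' : E → E}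
    (hg : IsLeftGradient B F g) (hg' : IsLeftGradient B F g') : g = g' := by
  funext x
  refine sub_eq_zero.mp (hB x _ fun w => ?_)
  rw [map_sub, LinearMap.sub_apply, hg, hg', sub_self]

theorem IsLeftGradient.mul {B : E → E →ₗ[𝕜] E →ₗ[𝕜] 𝕜} {F G : E → 𝕜} {gF gG : E → E}
    (hF : Differentiable 𝕜 F) (hG : Differentiable 𝕜 G)
    (hgF : IsLeftGradient B F gF) (hgG : IsLeftGradient B G gG) :
    IsLeftGradient B (fun y => F y * G y) (fun y => F y • gG y + G y • gF y) := by
  intro x w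
  simp only [fderiv_fun_mul (hF x) (hG x), map_add, map_smul, LinearMap.add_apply,
    LinearMap.smul_apply, add_apply, smul_apply, smul_eq_mul, hgF x, hgG x]

theorem IsLeftGradient.leibniz_defect [FiniteDimensional 𝕜 E] {B : E → E →ₗ[𝕜] E →ₗ[𝕜] 𝕜}
    (hB : ∀ x v, (∀ w, B x v w = 0) → v = 0) {F G : E → 𝕜} {gF gG g : E → E}
    (hF : Differentiable 𝕜 F) (hG : Differentiable 𝕜 G)
    (hgF' : Differentiable 𝕜 gF) (hgG' : Differentiable 𝕜 gG)
    (hgF : IsLeftGradient B F gF) (hgG : IsLeftGradient B G gG)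
    (hg : IsLeftGradient B (fun y => F y * G y) g) (x : E) :
    divergence g x - F x * divergence gG x - G x * divergence gF x =
      fderiv 𝕜 F x (gG x) + fderiv 𝕜 G x (gF x) := by
  rw [hg.unique hB (hgF.mul hF hG hgG),
    divergence_add (g₁ := fun y => F y • gG y) (g₂ := fun y => G y • gF y)
      ((hF x).smul (hgG' x)) ((hG x).smul (hgF' x)),
    divergence_smul (hF x) (hgG' x), divergence_smul (hG x) (hgF' x)]
  ring

end GeometricStructure

theorem laplacian_leibniz_defect_left_eq_right_general
    {E : Type*} [NormedAddCommGroup E] [NormedSpace ℝ E] [FiniteDimensional ℝ E]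
    (B : E → (E →ₗ[ℝ] E →ₗ[ℝ] ℝ))
    (hB1 : ∀ x v, (∀ w, B x v w = 0) → v = 0)
    (hB2 : ∀ x w, (∀ v, B x v w = 0) → w = 0)
    (F G : E → ℝ) (hF : Differentiable ℝ F) (hG : Differentiable ℝ G)
    (gF gG g hF' hG' h : E → E)
    (hgF : Differentiable ℝ gF) (hgG : Differentiable ℝ gG)
    (hhF : Differentiable ℝ hF') (hhG : Differentiable ℝ hG')
    (hgFgrad : ∀ x w, B x (gF x) w = fderiv ℝ F x w)
    (hgGgrad : ∀ x w, B x (gG x) w = fderiv ℝ G x w)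
    (hggrad : ∀ x w, B x (g x) w = fderiv ℝ (fun y => F y * G y) x w)
    (hhFgrad : ∀ x w, B x w (hF' x) = fderiv ℝ F x w)
    (hhGgrad : ∀ x w, B x w (hG' x) = fderiv ℝ G x w)
    (hhgrad : ∀ x w, B x w (h x) = fderiv ℝ (fun y => F y * G y) x w) :
    ∀ x, LinearMap.trace ℝ E (fderiv ℝ g x).toLinearMap -
        F x * LinearMap.trace ℝ E (fderiv ℝ gG x).toLinearMap -
        G x * LinearMap.trace ℝ E (fderiv ℝ gF x).toLinearMap =
      LinearMap.trace ℝ E (fderiv ℝ h x).toLinearMap -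
        F x * LinearMap.trace ℝ E (fderiv ℝ hG' x).toLinearMap -
        G x * LinearMap.trace ℝ E (fderiv ℝ hF' x).toLinearMap := by
  intro x
  -- A right gradient for `B` is a left gradient for the transposed forms `(B x).flip`.
  have left := IsLeftGradient.leibniz_defect hB1 hF hG hgF hgG hgFgrad hgGgrad hggrad x
  have right := IsLeftGradient.leibniz_defect (B := fun x => (B x).flip) hB2 hF hG hhF hhG
    hhFgrad hhGgrad hhgrad x
  have cross₁ : fderiv ℝ F x (gG x) = fderiv ℝ G x (hF' x) := by
    rw [← hhFgrad, ← hgGgrad]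
  have cross₂ : fderiv ℝ G x (gF x) = fderiv ℝ F x (hG' x) := by
    rw [← hhGgrad, ← hgFgrad]
  simp only [divergence] at left right
  rw [left, right, cross₁, cross₂, add_comm]

/-- The defect of the Leibniz rule is the same for the left and the right Laplacian:
`Δ^L_B(FG) − F Δ^L_B G − G Δ^L_B F = Δ^R_B(FG) − F Δ^R_B G − G Δ^R_B F`. -/
theorem laplacian_leibniz_defect_left_eq_right
    {E : Type*} [NormedAddCommGroup E] [NormedSpace ℝ E] [FiniteDimensional ℝ E]
    (B : E → (E →ₗ[ℝ] E →ₗ[ℝ] ℝ))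
    (hB1 : ∀ x v, (∀ w, B x v w = 0) → v = 0)
    (hB2 : ∀ x w, (∀ v, B x v w = 0) → w = 0)
    (F G : E → ℝ) (hF : Differentiable ℝ F) (hG : Differentiable ℝ G)
    (gF gG g hF' hG' h : E → E)
    (hgF : Differentiable ℝ gF) (hgG : Differentiable ℝ gG) (hg : Differentiable ℝ g)
    (hhF : Differentiable ℝ hF') (hhG : Differentiable ℝ hG') (hh : Differentiable ℝ h)
    (hgFgrad : ∀ x w, B x (gF x) w = fderiv ℝ F x w)
    (hgGgrad : ∀ x w, B x (gG x) w = fderiv ℝ G x w)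
    (hggrad : ∀ x w, B x (g x) w = fderiv ℝ (fun y => F y * G y) x w)
    (hhFgrad : ∀ x w, B x w (hF' x) = fderiv ℝ F x w)
    (hhGgrad : ∀ x w, B x w (hG' x) = fderiv ℝ G x w)
    (hhgrad : ∀ x w, B x w (h x) = fderiv ℝ (fun y => F y * G y) x w) :
    ∀ x, LinearMap.trace ℝ E (fderiv ℝ g x).toLinearMap -
        F x * LinearMap.trace ℝ E (fderiv ℝ gG x).toLinearMap -
        G x * LinearMap.trace ℝ E (fderiv ℝ gF x).toLinearMap =
      LinearMap.trace ℝ E (fderiv ℝ h x).toLinearMap -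
        F x * LinearMap.trace ℝ E (fderiv ℝ hG' x).toLinearMap -
        G x * LinearMap.trace ℝ E (fderiv ℝ hF' x).toLinearMap :=
  laplacian_leibniz_defect_left_eq_right_general B hB1 hB2 F G hF hG gF gG g hF' hG' h hgF hgG hhF
    hhG hgFgrad hgGgrad hggrad hhFgrad hhGgrad hhgrad
end

section
/- Let E be a finite-dimensional real normed vector space, Φ : E → E a C² diffeomorphism whose Jacobian determinant is identically 1 (det (fderiv ℝ Φ x) = 1 for all x), and X : E → E a differentiable vector field. Define the pushforward vector field Φ_*X : E → E by (Φ_*X)(y) := fderiv ℝ Φ (Φ⁻¹ y) (X (Φ⁻¹ y)). Then for every x ∈ E, trace(fderiv ℝ (Φ_*X) (Φ x)) = trace(fderiv ℝ X x); that is, the divergence with respect to the standard volume satisfies div(Φ_*X) ∘ Φ = div X for volume-preserving diffeomorphisms. -/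
/-!
Write `A = DΦ(x)`, `A⁻¹ = DΨ(Φ x)` and `B = D²Φ(x)`. The derivative of `Φ_*X` at `Φ x` is
`A ∘ DX(x) ∘ A⁻¹ + B(A⁻¹ ·, X x)`. The first term is conjugate to `DX(x)`, so it has the same
trace. By symmetry of `B`, the second term is `B(X x) ∘ A⁻¹`, whose trace
`trace (A⁻¹ ∘ B(X x))` is, by Jacobi's formula, the derivative of `det ∘ DΦ` at `x` in the
direction `X x`; it vanishes because `det ∘ DΦ ≡ 1`.
-/

open Function

theorem LinearMap.hasDerivAt_det_id_add_smul {𝕜 E : Type*} [NontriviallyNormedField 𝕜]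
    [AddCommGroup E] [Module 𝕜 E] [FiniteDimensional 𝕜 E] (f : E →ₗ[𝕜] E) :
    HasDerivAt (fun t : 𝕜 => LinearMap.det (LinearMap.id + t • f)) (LinearMap.trace 𝕜 E f) 0 := by
  let b := Module.finBasis 𝕜 E
  set M := LinearMap.toMatrix b b f
  have hpoly : (fun t : 𝕜 => LinearMap.det (LinearMap.id + t • f)) =
      fun t => (Matrix.det (1 + (Polynomial.X : Polynomial 𝕜) • M.map Polynomial.C)).eval t := by
    ext t
    rw [← Polynomial.coe_evalRingHom, RingHom.map_det, ← LinearMap.det_toMatrix b]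
    congr 1
    ext i j
    simp [M, Matrix.one_apply, apply_ite, mul_comm t]
  rw [hpoly, LinearMap.trace_eq_matrix_trace 𝕜 b, ← Matrix.derivative_det_one_add_X_smul]
  exact Polynomial.hasDerivAt _ 0

theorem LinearMap.trace_comp_comp_eq_of_comp_eq_id {R M N : Type*} [CommRing R]
    [AddCommGroup M] [Module R M] [Module.Free R M] [Module.Finite R M]
    [AddCommGroup N] [Module R N] [Module.Free R N] [Module.Finite R N]
    {A : M →ₗ[R] N} {C : N →ₗ[R] M} (hCA : C ∘ₗ A = LinearMap.id) (F : M →ₗ[R] M) :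
    LinearMap.trace R N (A ∘ₗ F ∘ₗ C) = LinearMap.trace R M F := by
  rw [← LinearMap.comp_assoc, LinearMap.trace_comp_comm', ← LinearMap.comp_assoc, hCA,
    LinearMap.id_comp]

section

variable {𝕜 E : Type*} [NontriviallyNormedField 𝕜] [CompleteSpace 𝕜]
  [NormedAddCommGroup E] [NormedSpace 𝕜 E] [FiniteDimensional 𝕜 E]

theorem ContinuousLinearMap.differentiable_det :
    Differentiable 𝕜 (fun g : E →L[𝕜] E => g.det) := by
  let b := Module.finBasis 𝕜 E
  have hentry : ∀ i j, Differentiable 𝕜 (fun g : E →L[𝕜] E => b.repr (g (b j)) i) := fun i j =>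
    ((LinearMap.toContinuousLinearMap (b.coord i)).comp
      (ContinuousLinearMap.apply 𝕜 E (b j))).differentiable
  simp_rw [ContinuousLinearMap.det, ← LinearMap.det_toMatrix b, Matrix.det_apply',
    LinearMap.toMatrix_apply]
  fun_prop

/-- Jacobi's formula. -/
theorem ContinuousLinearMap.fderiv_det_apply {A C : E →L[𝕜] E}
    (hCA : C ∘L A = ContinuousLinearMap.id 𝕜 E) (H : E →L[𝕜] E) :
    fderiv 𝕜 (fun g : E →L[𝕜] E => g.det) A H = A.det * LinearMap.trace 𝕜 E (C ∘L H) := by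
  have hAC : A ∘L C = ContinuousLinearMap.id 𝕜 E := by
    have : (C : E →ₗ[𝕜] E) ∘ₗ A = LinearMap.id := congr_arg ContinuousLinearMap.toLinearMap hCA
    exact ContinuousLinearMap.coe_injective ((LinearMap.comp_eq_id_comm 𝕜 E).mpr this)
  have hline : HasDerivAt (fun t : 𝕜 => A + t • H) H 0 := by
    simpa using ((hasDerivAt_id (0 : 𝕜)).smul_const H).const_add A
  have hchain : HasDerivAt (fun t : 𝕜 => (A + t • H).det)
      (fderiv 𝕜 (fun g : E →L[𝕜] E => g.det) A H) 0 :=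
    (ContinuousLinearMap.differentiable_det A).hasFDerivAt.comp_hasDerivAt_of_eq 0 hline
      (by simp)
  have hfactor : (fun t : 𝕜 => (A + t • H).det) =
      fun t => A.det * LinearMap.det (LinearMap.id + t • (C ∘L H : E →ₗ[𝕜] E)) := by
    ext t
    rw [ContinuousLinearMap.det, ← LinearMap.det_comp]
    congr 1
    ext v
    simp [← ContinuousLinearMap.comp_apply A C, hAC]
  rw [hfactor] at hchain
  exact hchain.unique ((LinearMap.hasDerivAt_det_id_add_smul _).const_mul _)

theorem trace_comp_fderiv_fderiv_eq_zero {Φ : E → E} (hdet : ∀ y, (fderiv 𝕜 Φ y).det = 1)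
    {x : E} (hD : DifferentiableAt 𝕜 (fderiv 𝕜 Φ) x) {C : E →L[𝕜] E}
    (hCA : C ∘L fderiv 𝕜 Φ x = ContinuousLinearMap.id 𝕜 E) (w : E) :
    LinearMap.trace 𝕜 E (C ∘L fderiv 𝕜 (fderiv 𝕜 Φ) x w) = 0 := by
  have hconst : fderiv 𝕜 (fun y => (fderiv 𝕜 Φ y).det) x = 0 := by
    simp only [hdet, fderiv_const_apply]
  have hchain := fderiv_comp x (ContinuousLinearMap.differentiable_det _) hD
  rw [comp_def, hconst] at hchain
  have := congr_arg (· w) hchain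
  simpa [ContinuousLinearMap.fderiv_det_apply hCA, hdet] using this.symm

end

theorem hasFDerivAt_pushforward {𝕜 E F : Type*} [NontriviallyNormedField 𝕜]
    [NormedAddCommGroup E] [NormedSpace 𝕜 E] [NormedAddCommGroup F] [NormedSpace 𝕜 F]
    {Φ : E → F} {Ψ : F → E} {X : E → E} {x : E} {y : F} {C : F →L[𝕜] E}
    {D : E →L[𝕜] E →L[𝕜] F} {X' : E →L[𝕜] E} (hΨ : HasFDerivAt Ψ C y) (hy : Ψ y = x)
    (hD : HasFDerivAt (fderiv 𝕜 Φ) D x) (hX : HasFDerivAt X X' x) :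
    HasFDerivAt (fun z => fderiv 𝕜 Φ (Ψ z) (X (Ψ z)))
      (fderiv 𝕜 Φ x ∘L X' ∘L C + (D ∘L C).flip (X x)) y := by
  subst hy
  exact (hD.comp y hΨ).clm_apply (hX.comp y hΨ)

theorem divergence_pushforward_volume_preserving_general
    {E : Type*} [NormedAddCommGroup E] [NormedSpace ℝ E] [FiniteDimensional ℝ E]
    (Φ Ψ : E → E)
    (hΦ : ContDiff ℝ 2 Φ) (hΨ : ContDiff ℝ 2 Ψ)
    (hΨΦ : LeftInverse Ψ Φ)
    (hdet : ∀ x, LinearMap.det (fderiv ℝ Φ x).toLinearMap = 1)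
    (X : E → E) (hX : Differentiable ℝ X) :
    ∀ x, LinearMap.trace ℝ E
        (fderiv ℝ (fun y => fderiv ℝ Φ (Ψ y) (X (Ψ y))) (Φ x)).toLinearMap =
      LinearMap.trace ℝ E (fderiv ℝ X x).toLinearMap := by
  intro x
  set C := fderiv ℝ Ψ (Φ x)
  set D := fderiv ℝ (fderiv ℝ Φ) x
  have hΨx : HasFDerivAt Ψ C (Φ x) := (hΨ.differentiable two_ne_zero _).hasFDerivAt
  have hDΦ : DifferentiableAt ℝ (fderiv ℝ Φ) x :=
    (hΦ.fderiv_right le_rfl).differentiable one_ne_zero x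
  have hCA : C ∘L fderiv ℝ Φ x = ContinuousLinearMap.id ℝ E := by
    have hcomp := hΨx.comp x (hΦ.differentiable two_ne_zero x).hasFDerivAt
    rw [show Ψ ∘ Φ = id from funext hΨΦ] at hcomp
    exact hcomp.unique (hasFDerivAt_id x)
  have hCA' : (C : E →ₗ[ℝ] E) ∘ₗ fderiv ℝ Φ x = LinearMap.id := by
    rw [← ContinuousLinearMap.toLinearMap_comp, hCA, ContinuousLinearMap.coe_id]
  have hflip : (D ∘L C).flip (X x) = D (X x) ∘L C := by
    ext v
    exact hΦ.contDiffAt.isSymmSndFDerivAt (by simp) (C v) (X x)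
  rw [(hasFDerivAt_pushforward hΨx (hΨΦ x) hDΦ.hasFDerivAt (hX x).hasFDerivAt).fderiv,
    hflip, ContinuousLinearMap.toLinearMap_add, map_add]
  simp only [ContinuousLinearMap.toLinearMap_comp]
  rw [LinearMap.trace_comp_comp_eq_of_comp_eq_id hCA', LinearMap.trace_comp_comm',
    ← ContinuousLinearMap.toLinearMap_comp, trace_comp_fderiv_fderiv_eq_zero hdet hDΦ hCA,
    add_zero]

/-- For a volume-preserving `C²` diffeomorphism `Φ` (Jacobian determinant identically `1`)
and a differentiable vector field `X`, the divergence (trace of the Fréchet derivative) of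
the pushforward vector field satisfies `div(Φ_*X) ∘ Φ = div X`. -/
theorem divergence_pushforward_volume_preserving
    {E : Type*} [NormedAddCommGroup E] [NormedSpace ℝ E] [FiniteDimensional ℝ E]
    (Φ Ψ : E → E)
    (hΦ : ContDiff ℝ 2 Φ) (hΨ : ContDiff ℝ 2 Ψ)
    (hΨΦ : LeftInverse Ψ Φ) (hΦΨ : RightInverse Ψ Φ)
    (hdet : ∀ x, LinearMap.det (fderiv ℝ Φ x).toLinearMap = 1)
    (X : E → E) (hX : Differentiable ℝ X) :
    ∀ x, LinearMap.trace ℝ E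
        (fderiv ℝ (fun y => fderiv ℝ Φ (Ψ y) (X (Ψ y))) (Φ x)).toLinearMap =
      LinearMap.trace ℝ E (fderiv ℝ X x).toLinearMap :=
  divergence_pushforward_volume_preserving_general Φ Ψ hΦ hΨ hΨΦ hdet X hX
end

section
/- Let n ∈ ℕ, let B and B' be geometric structures on E := EuclideanSpace ℝ (Fin n), and let Φ : E → E be a C² geometromorphism from (E,B) to (E,B') with Jacobian determinant identically 1 (det (fderiv ℝ Φ x) = 1 for all x). Let F : E → ℝ be differentiable with a differentiable left-gradient field gF with respect to B', and let g be a differentiable left-gradient field of F ∘ Φ with respect to B. Then for every x, trace(fderiv ℝ g x) = trace(fderiv ℝ gF (Φ x)); that is, Δ^L_B (F ∘ Φ) = (Δ^L_{B'} F) ∘ Φ. The same identity holds for right-gradient fields and right Laplacians. -/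
/-!
Differentiating the relation `DΦ(y) (g y) = gF (Φ y)` at `x` gives
`DΦ(x) ∘ Dg(x) + D²Φ(x) (g x) = DgF(Φ x) ∘ DΦ(x)`, so
`tr Dg(x) = tr DgF(Φ x) - tr (DΦ(x)⁻¹ ∘ D²Φ(x) (g x))`. By Jacobi's formula the last trace is the
derivative of `log det DΦ` in the direction `g x`, which vanishes because `det DΦ ≡ 1`.
The relation itself holds because both sides pair with every `DΦ(y) w` under `B' (Φ y)` to give
`dF(Φ y) (DΦ(y) w)`, and `DΦ(y)` is onto.
-/

open Function Filter Topology

theorem Matrix.det_one_updateCol {ι R : Type*} [Fintype ι] [DecidableEq ι] [CommRing R]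
    (j : ι) (c : ι → R) : ((1 : Matrix ι ι R).updateCol j c).det = c j := by
  have h := Matrix.det_updateCol_sum (1 : Matrix ι ι R) j c
  simp only [Matrix.one_apply, smul_eq_mul, mul_ite, mul_one, mul_zero, Finset.sum_ite_eq,
    Finset.mem_univ, if_true, Matrix.det_one] at h
  exact h

theorem Module.Basis.det_update {ι R M : Type*} [Fintype ι] [DecidableEq ι] [CommRing R]
    [AddCommGroup M] [Module R M] (b : Module.Basis ι R M) (i : ι) (w : M) :
    b.det (update b i w) = b.repr w i := by
  rw [b.det_apply, b.toMatrix_update, b.toMatrix_self, Matrix.det_one_updateCol]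

section Jacobi

variable {𝕜 : Type*} [NontriviallyNormedField 𝕜] [CompleteSpace 𝕜]
  {E : Type*} [NormedAddCommGroup E] [NormedSpace 𝕜 E] [FiniteDimensional 𝕜 E]

variable (𝕜 E) in
noncomputable def ContinuousLinearMap.traceCLM : (E →L[𝕜] E) →L[𝕜] 𝕜 :=
  LinearMap.toContinuousLinearMap (LinearMap.trace 𝕜 E ∘ₗ ContinuousLinearMap.coeLM 𝕜)

@[simp]
theorem ContinuousLinearMap.traceCLM_apply (f : E →L[𝕜] E) :
    traceCLM 𝕜 E f = LinearMap.trace 𝕜 E f :=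
  rfl

noncomputable def Module.Basis.continuousMultilinearDet {ι : Type*} [Fintype ι] [DecidableEq ι]
    (b : Module.Basis ι 𝕜 E) : ContinuousMultilinearMap 𝕜 (fun _ : ι => E) 𝕜 where
  toMultilinearMap := b.det.toMultilinearMap
  cont := by
    change Continuous fun v => b.det v
    simp_rw [b.det_apply]
    refine Continuous.matrix_det (continuous_pi fun i => continuous_pi fun j => ?_)
    simp only [Module.Basis.toMatrix_apply]
    exact ((LinearMap.proj i).comp b.equivFun.toLinearMap).continuous_of_finiteDimensional.comp
      (continuous_apply j)

theorem ContinuousLinearMap.hasFDerivAt_det_id :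
    HasFDerivAt (fun f : E →L[𝕜] E => f.det) (traceCLM 𝕜 E) (.id 𝕜 E) := by
  classical
  let b := Module.finBasis 𝕜 E
  let evalBasis : (E →L[𝕜] E) →L[𝕜] (Fin (Module.finrank 𝕜 E) → E) :=
    pi fun i => apply 𝕜 E (b i)
  have hdet : (fun f : E →L[𝕜] E => f.det) = b.continuousMultilinearDet ∘ evalBasis := by
    funext f
    change LinearMap.det (f : E →ₗ[𝕜] E) = b.det ((f : E →ₗ[𝕜] E) ∘ b)
    rw [b.det_comp, b.det_self, mul_one]
  have hD := b.continuousMultilinearDet.hasFDerivAt (evalBasis (.id 𝕜 E))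
  rw [hdet]
  refine (hD.comp _ evalBasis.hasFDerivAt).congr_fderiv (ext fun N => ?_)
  change b.continuousMultilinearDet.linearDeriv b (fun i => N (b i)) = LinearMap.trace 𝕜 E N
  rw [ContinuousMultilinearMap.linearDeriv_apply, LinearMap.trace_eq_matrix_trace 𝕜 b,
    Matrix.trace]
  refine Finset.sum_congr rfl fun i _ => ?_
  rw [Matrix.diag_apply, LinearMap.toMatrix_apply]
  exact b.det_update i _

theorem trace_comp_fderiv_eq_zero_of_det_eventuallyEq {F : Type*} [NormedAddCommGroup F]
    [NormedSpace 𝕜 F] {A : F → E →L[𝕜] E} {x : F} (hA : DifferentiableAt 𝕜 A x)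
    (hdet : ∀ᶠ y in 𝓝 x, (A y).det = (A x).det) {P : E →L[𝕜] E}
    (hP : P ∘L A x = ContinuousLinearMap.id 𝕜 E) (u : F) :
    LinearMap.trace 𝕜 E (P ∘L fderiv 𝕜 A x u) = 0 := by
  have hcomp : HasFDerivAt (fun y => (P ∘L A y).det)
      ((ContinuousLinearMap.traceCLM 𝕜 E).comp
        ((ContinuousLinearMap.compL 𝕜 E E E P).comp (fderiv 𝕜 A x))) x := by
    have hdet_at : HasFDerivAt (fun f : E →L[𝕜] E => f.det) (ContinuousLinearMap.traceCLM 𝕜 E)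
        (P ∘L A x) := hP ▸ ContinuousLinearMap.hasFDerivAt_det_id
    exact hdet_at.comp x ((ContinuousLinearMap.compL 𝕜 E E E P).hasFDerivAt.comp x hA.hasFDerivAt)
  have hconst : HasFDerivAt (fun y => (P ∘L A y).det) (0 : F →L[𝕜] 𝕜) x := by
    refine (hasFDerivAt_const (𝕜 := 𝕜) (P ∘L A x).det x).congr_of_eventuallyEq ?_
    filter_upwards [hdet] with y hy
    change LinearMap.det ((P : E →ₗ[𝕜] E) ∘ₗ (A y : E →ₗ[𝕜] E)) =
      LinearMap.det ((P : E →ₗ[𝕜] E) ∘ₗ (A x : E →ₗ[𝕜] E))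
    rw [LinearMap.det_comp, LinearMap.det_comp]
    exact congrArg _ hy
  simpa using congr($(hcomp.unique hconst) u)

end Jacobi

theorem trace_fderiv_eq_of_fderiv_apply_eq {𝕜 : Type*} [RCLike 𝕜]
    {E : Type*} [NormedAddCommGroup E] [NormedSpace 𝕜 E] [FiniteDimensional 𝕜 E]
    {Φ g h : E → E} {x : E} (hΦ : ContDiffAt 𝕜 2 Φ x)
    (hdet : ∀ᶠ y in 𝓝 x, (fderiv 𝕜 Φ y).det = (fderiv 𝕜 Φ x).det)
    (hdet₀ : (fderiv 𝕜 Φ x).det ≠ 0)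
    (hg : DifferentiableAt 𝕜 g x) (hh : DifferentiableAt 𝕜 h (Φ x))
    (hrel : ∀ᶠ y in 𝓝 x, fderiv 𝕜 Φ y (g y) = h (Φ y)) :
    LinearMap.trace 𝕜 E (fderiv 𝕜 g x) = LinearMap.trace 𝕜 E (fderiv 𝕜 h (Φ x)) := by
  have hA : DifferentiableAt 𝕜 (fderiv 𝕜 Φ) x :=
    (hΦ.fderiv_right (m := 1) (by norm_num)).differentiableAt one_ne_zero
  have hsymm : IsSymmSndFDerivAt 𝕜 Φ x :=
    hΦ.isSymmSndFDerivAt (by simp [minSmoothness_of_isRCLikeNormedField])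
  have hL := (hA.hasFDerivAt.clm_apply hg.hasFDerivAt).congr_of_eventuallyEq
    (hrel.mono fun y hy => hy.symm)
  have hR := hh.hasFDerivAt.comp x (hΦ.differentiableAt two_ne_zero).hasFDerivAt
  have key : fderiv 𝕜 Φ x ∘L fderiv 𝕜 g x + fderiv 𝕜 (fderiv 𝕜 Φ) x (g x) =
      fderiv 𝕜 h (Φ x) ∘L fderiv 𝕜 Φ x := by
    have hflip : (fderiv 𝕜 (fderiv 𝕜 Φ) x).flip (g x) = fderiv 𝕜 (fderiv 𝕜 Φ) x (g x) :=
      ContinuousLinearMap.ext fun v => hsymm v (g x)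
    rw [← hflip]
    exact hL.unique hR
  set e := (fderiv 𝕜 Φ x).toContinuousLinearEquivOfDetNeZero hdet₀
  have he : (e : E →L[𝕜] E) = fderiv 𝕜 Φ x := by simp [e]
  have hDg : fderiv 𝕜 g x = (e.symm : E →L[𝕜] E) ∘L fderiv 𝕜 h (Φ x) ∘L (e : E →L[𝕜] E) -
      (e.symm : E →L[𝕜] E) ∘L fderiv 𝕜 (fderiv 𝕜 Φ) x (g x) := by
    rw [he, ← key, ← he]
    ext v
    simp
  have hconj : LinearMap.trace 𝕜 E ((e.symm : E →L[𝕜] E) ∘L fderiv 𝕜 h (Φ x) ∘L (e : E →L[𝕜] E))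
      = LinearMap.trace 𝕜 E (fderiv 𝕜 h (Φ x)) := by
    rw [ContinuousLinearMap.toLinearMap_comp, LinearMap.trace_comp_comm',
      ContinuousLinearMap.toLinearMap_comp, LinearMap.comp_assoc,
      ← ContinuousLinearMap.toLinearMap_comp, e.coe_comp_coe_symm]
    rfl
  have hjacobi := trace_comp_fderiv_eq_zero_of_det_eventuallyEq hA hdet
    (P := e.symm) (by rw [← he]; exact e.coe_symm_comp_coe) (g x)
  rw [hDg, ContinuousLinearMap.toLinearMap_sub, map_sub, hconj, hjacobi, sub_zero]

theorem fderiv_apply_eq_of_leftGradient_comp {𝕜 E E' : Type*} [NontriviallyNormedField 𝕜]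
    [NormedAddCommGroup E] [NormedSpace 𝕜 E] [NormedAddCommGroup E'] [NormedSpace 𝕜 E']
    {β : E →ₗ[𝕜] E →ₗ[𝕜] 𝕜} {β' : E' →ₗ[𝕜] E' →ₗ[𝕜] 𝕜} {Φ : E → E'} {F : E' → 𝕜} {y : E}
    {v : E} {v' : E'} (hβ' : ∀ u, (∀ w, β' u w = 0) → u = 0)
    (hpres : ∀ u w, β' (fderiv 𝕜 Φ y u) (fderiv 𝕜 Φ y w) = β u w)
    (hsurj : Surjective (fderiv 𝕜 Φ y)) (hF : DifferentiableAt 𝕜 F (Φ y))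
    (hΦ : DifferentiableAt 𝕜 Φ y) (hv' : ∀ w, β' v' w = fderiv 𝕜 F (Φ y) w)
    (hv : ∀ w, β v w = fderiv 𝕜 (F ∘ Φ) y w) :
    fderiv 𝕜 Φ y v = v' := by
  refine sub_eq_zero.mp (hβ' _ fun w' => ?_)
  obtain ⟨w, rfl⟩ := hsurj w'
  rw [map_sub, LinearMap.sub_apply, hpres, hv, hv', fderiv_comp y hF hΦ,
    ContinuousLinearMap.comp_apply, sub_self]

theorem laplacian_natural_under_geometromorphism_general {n : ℕ}
    (B B' : EuclideanSpace ℝ (Fin n) →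
      (EuclideanSpace ℝ (Fin n) →ₗ[ℝ] EuclideanSpace ℝ (Fin n) →ₗ[ℝ] ℝ))
    (hB'1 : ∀ x v, (∀ w, B' x v w = 0) → v = 0)
    (hB'2 : ∀ x w, (∀ v, B' x v w = 0) → w = 0)
    (Φ : EuclideanSpace ℝ (Fin n) → EuclideanSpace ℝ (Fin n))
    (hΦ : ContDiff ℝ 2 Φ)
    (hpres : ∀ x v w, B' (Φ x) (fderiv ℝ Φ x v) (fderiv ℝ Φ x w) = B x v w)
    (hdet : ∀ x, LinearMap.det (fderiv ℝ Φ x).toLinearMap = 1)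
    (F : EuclideanSpace ℝ (Fin n) → ℝ) (hF : Differentiable ℝ F) :
    (∀ gF g : EuclideanSpace ℝ (Fin n) → EuclideanSpace ℝ (Fin n),
      Differentiable ℝ gF → Differentiable ℝ g →
      (∀ x w, B' x (gF x) w = fderiv ℝ F x w) →
      (∀ x w, B x (g x) w = fderiv ℝ (F ∘ Φ) x w) →
      ∀ x, LinearMap.trace ℝ (EuclideanSpace ℝ (Fin n)) (fderiv ℝ g x).toLinearMap =
        LinearMap.trace ℝ (EuclideanSpace ℝ (Fin n)) (fderiv ℝ gF (Φ x)).toLinearMap) ∧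
    (∀ gF g : EuclideanSpace ℝ (Fin n) → EuclideanSpace ℝ (Fin n),
      Differentiable ℝ gF → Differentiable ℝ g →
      (∀ x w, B' x w (gF x) = fderiv ℝ F x w) →
      (∀ x w, B x w (g x) = fderiv ℝ (F ∘ Φ) x w) →
      ∀ x, LinearMap.trace ℝ (EuclideanSpace ℝ (Fin n)) (fderiv ℝ g x).toLinearMap =
        LinearMap.trace ℝ (EuclideanSpace ℝ (Fin n)) (fderiv ℝ gF (Φ x)).toLinearMap) := by
  have hΦd : Differentiable ℝ Φ := hΦ.differentiable two_ne_zero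
  have hdet_ne : ∀ x, (fderiv ℝ Φ x).det ≠ 0 := fun x => by simp [ContinuousLinearMap.det, hdet x]
  have hdet_const : ∀ x, ∀ᶠ y in 𝓝 x, (fderiv ℝ Φ y).det = (fderiv ℝ Φ x).det :=
    fun x => .of_forall fun y => (hdet y).trans (hdet x).symm
  have hsurj : ∀ x, Surjective (fderiv ℝ Φ x) := fun x =>
    ((fderiv ℝ Φ x).toContinuousLinearEquivOfDetNeZero (hdet_ne x)).surjective
  refine ⟨fun gF g hgFd hgd hgF hg x => ?_, fun gF g hgFd hgd hgF hg x => ?_⟩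
  · refine trace_fderiv_eq_of_fderiv_apply_eq hΦ.contDiffAt (hdet_const x) (hdet_ne x) (hgd x)
      (hgFd _) (.of_forall fun y => ?_)
    exact fderiv_apply_eq_of_leftGradient_comp (hB'1 _) (hpres y) (hsurj y) (hF _) (hΦd y)
      (hgF _) (hg y)
  · refine trace_fderiv_eq_of_fderiv_apply_eq hΦ.contDiffAt (hdet_const x) (hdet_ne x) (hgd x)
      (hgFd _) (.of_forall fun y => ?_)
    exact fderiv_apply_eq_of_leftGradient_comp (β := (B y).flip) (β' := (B' (Φ y)).flip)
      (hB'2 _) (fun u w => hpres y w u) (hsurj y) (hF _) (hΦd y) (hgF _) (hg y)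

/-- Left and right Laplacians are natural under volume-preserving geometromorphisms:
`Δ^{L/R}_B (F ∘ Φ) = (Δ^{L/R}_{B'} F) ∘ Φ`. -/
theorem laplacian_natural_under_geometromorphism {n : ℕ}
    (B B' : EuclideanSpace ℝ (Fin n) →
      (EuclideanSpace ℝ (Fin n) →ₗ[ℝ] EuclideanSpace ℝ (Fin n) →ₗ[ℝ] ℝ))
    (hB1 : ∀ x v, (∀ w, B x v w = 0) → v = 0)
    (hB2 : ∀ x w, (∀ v, B x v w = 0) → w = 0)
    (hB'1 : ∀ x v, (∀ w, B' x v w = 0) → v = 0)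
    (hB'2 : ∀ x w, (∀ v, B' x v w = 0) → w = 0)
    (Φ Ψ : EuclideanSpace ℝ (Fin n) → EuclideanSpace ℝ (Fin n))
    (hΦ : ContDiff ℝ 2 Φ) (hΨ : ContDiff ℝ 2 Ψ)
    (hΨΦ : LeftInverse Ψ Φ) (hΦΨ : RightInverse Ψ Φ)
    (hpres : ∀ x v w, B' (Φ x) (fderiv ℝ Φ x v) (fderiv ℝ Φ x w) = B x v w)
    (hdet : ∀ x, LinearMap.det (fderiv ℝ Φ x).toLinearMap = 1)
    (F : EuclideanSpace ℝ (Fin n) → ℝ) (hF : Differentiable ℝ F) :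
    (∀ gF g : EuclideanSpace ℝ (Fin n) → EuclideanSpace ℝ (Fin n),
      Differentiable ℝ gF → Differentiable ℝ g →
      (∀ x w, B' x (gF x) w = fderiv ℝ F x w) →
      (∀ x w, B x (g x) w = fderiv ℝ (F ∘ Φ) x w) →
      ∀ x, LinearMap.trace ℝ (EuclideanSpace ℝ (Fin n)) (fderiv ℝ g x).toLinearMap =
        LinearMap.trace ℝ (EuclideanSpace ℝ (Fin n)) (fderiv ℝ gF (Φ x)).toLinearMap) ∧
    (∀ gF g : EuclideanSpace ℝ (Fin n) → EuclideanSpace ℝ (Fin n),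
      Differentiable ℝ gF → Differentiable ℝ g →
      (∀ x w, B' x w (gF x) = fderiv ℝ F x w) →
      (∀ x w, B x w (g x) = fderiv ℝ (F ∘ Φ) x w) →
      ∀ x, LinearMap.trace ℝ (EuclideanSpace ℝ (Fin n)) (fderiv ℝ g x).toLinearMap =
        LinearMap.trace ℝ (EuclideanSpace ℝ (Fin n)) (fderiv ℝ gF (Φ x)).toLinearMap) :=
  laplacian_natural_under_geometromorphism_general B B' hB'1 hB'2 Φ hΦ hpres hdet F hF
end

section
/- Let E be a finite-dimensional real normed vector space with a continuous geometric structure B that is pointwise positive definite (B x v v > 0 for every x ∈ E and every v ≠ 0) or pointwise negative definite (B x v v < 0 for every x and every v ≠ 0). Let F : E → ℝ be differentiable with a left-gradient field gF with respect to B, let T > 0, and let γ : ℝ → E be continuously differentiable with deriv γ t = gF (γ t) for all t and γ 0 = γ T. Then γ is constant on [0, T]; that is, the left-gradient vector field of F admits no non-trivial periodic orbits. The same conclusion holds for a right-gradient field of F. -/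
/-!
Along an integral curve `γ` of a left- or right-gradient field of `F`, the chain rule gives
`(F ∘ γ)' = dF(γ') = B γ (γ', γ')`, so definiteness of `B` makes `F ∘ γ` a strict Lyapunov
function: it is monotone, and strictly so wherever `γ' ≠ 0`. Periodicity forces `F ∘ γ` to be
constant on `[0, T]`, hence `γ' = 0` there and `γ` is constant.
-/

open Set

theorem eqOn_zero_of_hasDerivAt_nonneg_of_eq {f f' : ℝ → ℝ} {a b : ℝ} (hab : a < b)
    (hf : ∀ t ∈ Icc a b, HasDerivAt f (f' t) t) (hf' : ∀ t ∈ Icc a b, 0 ≤ f' t)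
    (hfab : f a = f b) : EqOn f' 0 (Icc a b) := by
  have hmono : MonotoneOn f (Icc a b) := by
    refine monotoneOn_of_deriv_nonneg (convex_Icc a b)
      (fun t ht => (hf t ht).continuousAt.continuousWithinAt)
      (fun t ht => (hf t (interior_subset ht)).differentiableAt.differentiableWithinAt)
      (fun t ht => ?_)
    rw [(hf t (interior_subset ht)).deriv]
    exact hf' t (interior_subset ht)
  have hconst : ∀ t ∈ Icc a b, f t = f a := fun t ht =>
    le_antisymm (hfab ▸ hmono ht (right_mem_Icc.2 hab.le) ht.2)
      (hmono (left_mem_Icc.2 hab.le) ht ht.1)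
  -- `f` agrees with a constant on `[a, b]`, and derivatives within `[a, b]` are unique even at
  -- the endpoints.
  intro t ht
  exact (uniqueDiffOn_Icc hab t ht).eq_deriv _ (hf t ht).hasDerivWithinAt
    ((hasDerivWithinAt_const t _ (f a)).congr_of_mem hconst ht)

section

variable {E : Type*} [NormedAddCommGroup E] [NormedSpace ℝ E]

theorem eqOn_Icc_of_hasDerivAt_posDef {B : E → E →ₗ[ℝ] E →ₗ[ℝ] ℝ}
    (hB : ∀ x v, v ≠ 0 → 0 < B x v v) {γ : ℝ → E} {V : ℝ → ℝ} {a b : ℝ} (hab : a < b)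
    (hγ : ∀ t ∈ Icc a b, DifferentiableAt ℝ γ t)
    (hV : ∀ t ∈ Icc a b, HasDerivAt V (B (γ t) (deriv γ t) (deriv γ t)) t) (hVab : V a = V b) :
    ∀ t ∈ Icc a b, γ t = γ a := by
  have hB_nonneg : ∀ x v, 0 ≤ B x v v := fun x v => by
    rcases eq_or_ne v 0 with rfl | hv
    · simp
    · exact (hB x v hv).le
  have hV' := eqOn_zero_of_hasDerivAt_nonneg_of_eq hab hV (fun t _ => hB_nonneg _ _) hVab
  have hγ' : ∀ t ∈ Icc a b, deriv γ t = 0 := fun t ht => by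
    by_contra hne
    exact (hB _ _ hne).ne' (hV' ht)
  refine constant_of_has_deriv_right_zero (fun t ht => (hγ t ht).continuousAt.continuousWithinAt)
    fun t ht => ?_
  have ht' := Ico_subset_Icc_self ht
  simpa only [hγ' t ht'] using (hγ t ht').hasDerivAt.hasDerivWithinAt

theorem eqOn_Icc_of_hasDerivAt_definite {B : E → E →ₗ[ℝ] E →ₗ[ℝ] ℝ}
    (hB : (∀ x v, v ≠ 0 → 0 < B x v v) ∨ (∀ x v, v ≠ 0 → B x v v < 0))
    {γ : ℝ → E} {V : ℝ → ℝ} {a b : ℝ} (hab : a < b)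
    (hγ : ∀ t ∈ Icc a b, DifferentiableAt ℝ γ t)
    (hV : ∀ t ∈ Icc a b, HasDerivAt V (B (γ t) (deriv γ t) (deriv γ t)) t) (hVab : V a = V b) :
    ∀ t ∈ Icc a b, γ t = γ a := by
  rcases hB with hpos | hneg
  · exact eqOn_Icc_of_hasDerivAt_posDef hpos hab hγ hV hVab
  · refine eqOn_Icc_of_hasDerivAt_posDef (B := fun x => -B x) (V := -V)
      (fun x v hv => ?_) hab hγ (fun t ht => ?_) (congrArg Neg.neg hVab)
    · simpa using hneg x v hv
    · simpa only [LinearMap.neg_apply] using (hV t ht).neg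

end

theorem no_periodic_orbits_of_definite_general
    {E : Type*} [NormedAddCommGroup E] [NormedSpace ℝ E]
    (B : E → (E →ₗ[ℝ] E →ₗ[ℝ] ℝ))
    (hdef : (∀ x v, v ≠ 0 → 0 < B x v v) ∨ (∀ x v, v ≠ 0 → B x v v < 0))
    (F : E → ℝ) (hF : Differentiable ℝ F)
    (gF : E → E) (T : ℝ) (hT : 0 < T)
    (γ : ℝ → E) (hγ : ContDiff ℝ 1 γ)
    (hflow : ∀ t, deriv γ t = gF (γ t)) (hper : γ 0 = γ T) :
    ((∀ x w, B x (gF x) w = fderiv ℝ F x w) → ∀ t ∈ Set.Icc (0 : ℝ) T, γ t = γ 0) ∧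
    ((∀ x w, B x w (gF x) = fderiv ℝ F x w) → ∀ t ∈ Set.Icc (0 : ℝ) T, γ t = γ 0) := by
  have hγd : Differentiable ℝ γ := hγ.differentiable one_ne_zero
  suffices h : (∀ x, B x (gF x) (gF x) = fderiv ℝ F x (gF x)) → ∀ t ∈ Icc 0 T, γ t = γ 0 from
    ⟨fun hL => h fun x => hL x (gF x), fun hR => h fun x => hR x (gF x)⟩
  intro hgrad
  refine eqOn_Icc_of_hasDerivAt_definite hdef hT (fun t _ => hγd t) (V := F ∘ γ)
    (fun t _ => ?_) (congrArg F hper)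
  rw [hflow, hgrad]
  exact (hF (γ t)).hasFDerivAt.comp_hasDerivAt t (hflow t ▸ (hγd t).hasDerivAt)

/-- If the geometric structure `B` is pointwise positive definite or pointwise negative
definite, then gradient-like vector fields have no non-trivial periodic orbits: any
periodic integral curve of a left- (or right-) gradient field of `F` is constant. -/
theorem no_periodic_orbits_of_definite
    {E : Type*} [NormedAddCommGroup E] [NormedSpace ℝ E] [FiniteDimensional ℝ E]
    (B : E → (E →ₗ[ℝ] E →ₗ[ℝ] ℝ))
    (hB1 : ∀ x v, (∀ w, B x v w = 0) → v = 0)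
    (hB2 : ∀ x w, (∀ v, B x v w = 0) → w = 0)
    (hBcont : Continuous fun p : E × E × E => B p.1 p.2.1 p.2.2)
    (hdef : (∀ x v, v ≠ 0 → 0 < B x v v) ∨ (∀ x v, v ≠ 0 → B x v v < 0))
    (F : E → ℝ) (hF : Differentiable ℝ F)
    (gF : E → E) (T : ℝ) (hT : 0 < T)
    (γ : ℝ → E) (hγ : ContDiff ℝ 1 γ)
    (hflow : ∀ t, deriv γ t = gF (γ t)) (hper : γ 0 = γ T) :
    ((∀ x w, B x (gF x) w = fderiv ℝ F x w) → ∀ t ∈ Set.Icc (0 : ℝ) T, γ t = γ 0) ∧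
    ((∀ x w, B x w (gF x) = fderiv ℝ F x w) → ∀ t ∈ Set.Icc (0 : ℝ) T, γ t = γ 0) :=
  no_periodic_orbits_of_definite_general B hdef F hF gF T hT γ hγ hflow hper
end
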